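/- arXiv:0905.2884 — 2 statements merged into one kernel-verified Lean document; each statement's English description precedes it below -/
import Mathlib

section
/- Let δ₀ > 0 and 0 < m < 1 with δ₀ < m/√5 and δ₀ ≤ 10/(3√5). For each δ with |δ| ≤ δ₀, the operator (Jv)(ξ) = δ·ξ^{-2}·∫₀^ξ t⁴·(p(t) - v(t))^{3/2} dt maps the closed ball {v : ‖v‖_∞ ≤ m} in C([0,1]) into itself, where p(t) = 4 - 6t² + 4t⁴ - t⁶. -/
/-- For `δ₀ < m/√5`, `δ₀ ≤ 10/(3√5)`, `0 < m < 1` and `|δ| ≤ δ₀`, the operator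
`(Jv)(ξ) = δ ξ⁻² ∫₀^ξ t⁴ (p(t) - v(t))^{3/2} dt` maps the closed ball of
radius `m` in `C([0,1])` into itself, where `p(t) = 4 - 6t² + 4t⁴ - t⁶`. -/
theorem J_maps_ball_to_ball (δ₀ m δ : ℝ) (hm0 : 0 < m) (hm1 : m < 1)
    (hδ₀ : 0 < δ₀) (h1 : δ₀ < m / Real.sqrt 5) (h2 : δ₀ ≤ 10 / (3 * Real.sqrt 5))
    (hδ : |δ| ≤ δ₀) (v : ℝ → ℝ) (hv : ContinuousOn v (Set.Icc 0 1))
    (hvm : ∀ t ∈ Set.Icc (0:ℝ) 1, |v t| ≤ m) :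
    ContinuousOn
      (fun ξ => δ * (ξ^2)⁻¹ *
        ∫ t in (0:ℝ)..ξ, t^4 * (((4 - 6*t^2 + 4*t^4 - t^6) - v t) ^ ((3:ℝ)/2)))
      (Set.Icc 0 1) ∧
    ∀ ξ ∈ Set.Icc (0:ℝ) 1,
      |δ * (ξ^2)⁻¹ *
        ∫ t in (0:ℝ)..ξ, t^4 * (((4 - 6*t^2 + 4*t^4 - t^6) - v t) ^ ((3:ℝ)/2))| ≤ m := by
  have hs5 : (0:ℝ) < Real.sqrt 5 := Real.sqrt_pos.mpr (by norm_num)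
  set g : ℝ → ℝ := fun t => t^4 * (((4 - 6*t^2 + 4*t^4 - t^6) - v t) ^ ((3:ℝ)/2)) with hg
  set f : ℝ → ℝ := fun ξ => δ * (ξ^2)⁻¹ * ∫ t in (0:ℝ)..ξ, g t with hf
  -- pointwise bounds on the base
  have hbase : ∀ t ∈ Set.Icc (0:ℝ) 1,
      0 ≤ (4 - 6*t^2 + 4*t^4 - t^6) - v t ∧ (4 - 6*t^2 + 4*t^4 - t^6) - v t ≤ 5 := by
    intro t ht
    obtain ⟨ht0, ht1⟩ := ht
    have hvb := abs_le.mp (hvm t ⟨ht0, ht1⟩)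
    constructor
    · have hprod : 0 ≤ (1 - t^2) * (t^4 - 3*t^2 + 3) :=
        mul_nonneg (by nlinarith) (by nlinarith [sq_nonneg (t^2 - 3/2)])
      nlinarith [hvb.2]
    · nlinarith [hvb.1, hvb.2, sq_nonneg t, sq_nonneg (t^2 - 2), mul_nonneg (mul_nonneg ht0 ht0) (sq_nonneg (t^2-2))]
  -- g continuous on [0,1]
  have hg_cont : ContinuousOn g (Set.Icc 0 1) := by
    apply ContinuousOn.mul (by fun_prop)
    apply ContinuousOn.rpow_const
    · exact ContinuousOn.sub (by fun_prop) hv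
    · intro t _; right; norm_num
  have hg_int : ∀ ξ ∈ Set.Icc (0:ℝ) 1, IntervalIntegrable g MeasureTheory.volume 0 ξ := by
    intro ξ hξ
    apply ContinuousOn.intervalIntegrable
    apply hg_cont.mono
    rw [Set.uIcc_of_le hξ.1]
    exact Set.Icc_subset_Icc le_rfl hξ.2
  -- bound on integral
  have hint_bound : ∀ ξ ∈ Set.Icc (0:ℝ) 1,
      |∫ t in (0:ℝ)..ξ, g t| ≤ Real.sqrt 5 * ξ^5 := by
    intro ξ hξ
    have hpow : ((5:ℝ) ^ ((3:ℝ)/2)) = 5 * Real.sqrt 5 := by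
      rw [show (3:ℝ)/2 = 1 + 1/2 by norm_num, Real.rpow_add (by norm_num), Real.rpow_one,
        ← Real.sqrt_eq_rpow]
    have hgnn : ∀ t ∈ Set.Icc (0:ℝ) ξ, 0 ≤ g t := by
      intro t ht
      have ht1 : t ∈ Set.Icc (0:ℝ) 1 := ⟨ht.1, ht.2.trans hξ.2⟩
      exact mul_nonneg (by positivity) (Real.rpow_nonneg (hbase t ht1).1 _)
    have hgle : ∀ t ∈ Set.Icc (0:ℝ) ξ, g t ≤ (5:ℝ) ^ ((3:ℝ)/2) * t^4 := by
      intro t ht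
      have ht1 : t ∈ Set.Icc (0:ℝ) 1 := ⟨ht.1, ht.2.trans hξ.2⟩
      have hb := hbase t ht1
      have : ((4 - 6*t^2 + 4*t^4 - t^6) - v t) ^ ((3:ℝ)/2) ≤ (5:ℝ) ^ ((3:ℝ)/2) :=
        Real.rpow_le_rpow hb.1 hb.2 (by norm_num)
      calc g t ≤ t^4 * (5:ℝ) ^ ((3:ℝ)/2) := by
            exact mul_le_mul_of_nonneg_left this (by positivity)
        _ = (5:ℝ) ^ ((3:ℝ)/2) * t^4 := mul_comm _ _
    have hI1 : (0:ℝ) ≤ ∫ t in (0:ℝ)..ξ, g t :=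
      intervalIntegral.integral_nonneg hξ.1 (fun u hu => hgnn u hu)
    have hint2 : IntervalIntegrable (fun t => (5:ℝ) ^ ((3:ℝ)/2) * t^4)
        MeasureTheory.volume 0 ξ := (continuous_const.mul (continuous_pow 4)).intervalIntegrable _ _
    have hI2 : (∫ t in (0:ℝ)..ξ, g t) ≤ ∫ t in (0:ℝ)..ξ, (5:ℝ) ^ ((3:ℝ)/2) * t^4 :=
      intervalIntegral.integral_mono_on hξ.1 (hg_int ξ hξ) hint2 hgle
    have hval : (∫ t in (0:ℝ)..ξ, (5:ℝ) ^ ((3:ℝ)/2) * t^4) = Real.sqrt 5 * ξ^5 := by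
      rw [intervalIntegral.integral_const_mul, integral_pow, hpow]
      ring
    rw [abs_of_nonneg hI1]
    linarith [hval ▸ hI2]
  -- main pointwise bound |f ξ| ≤ δ₀ * √5 * ξ^3
  have hmain : ∀ ξ ∈ Set.Icc (0:ℝ) 1, |f ξ| ≤ δ₀ * Real.sqrt 5 * ξ^3 := by
    intro ξ hξ
    rcases eq_or_lt_of_le hξ.1 with h0 | h0
    · simp [hf, ← h0]
    · have h2inv : (0:ℝ) < (ξ^2)⁻¹ := by positivity
      have : |f ξ| = |δ| * (ξ^2)⁻¹ * |∫ t in (0:ℝ)..ξ, g t| := by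
        rw [hf]; rw [abs_mul, abs_mul, abs_of_pos h2inv]
      rw [this]
      have hb := hint_bound ξ hξ
      calc |δ| * (ξ^2)⁻¹ * |∫ t in (0:ℝ)..ξ, g t|
          ≤ δ₀ * (ξ^2)⁻¹ * (Real.sqrt 5 * ξ^5) := by
            apply mul_le_mul (mul_le_mul_of_nonneg_right hδ h2inv.le) hb (abs_nonneg _)
            positivity
        _ = δ₀ * Real.sqrt 5 * ξ^3 := by
            field_simp
  have hF_cont : ContinuousOn (fun ξ => ∫ t in (0:ℝ)..ξ, g t) (Set.Icc 0 1) := by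
    have := intervalIntegral.continuousOn_primitive_interval
      (μ := MeasureTheory.volume) (f := g) (a := (0:ℝ)) (b := 1)
      (by rw [Set.uIcc_of_le zero_le_one]
          exact (hg_cont.mono le_rfl).integrableOn_compact isCompact_Icc)
    rwa [Set.uIcc_of_le zero_le_one] at this
  constructor
  · intro ξ hξ
    rcases eq_or_lt_of_le hξ.1 with h0 | h0
    · -- continuity at 0 by squeeze
      rw [← h0]
      have hf0 : f 0 = 0 := by simp [hf]
      unfold ContinuousWithinAt
      rw [hf0]
      apply squeeze_zero_norm' (a := fun ξ => δ₀ * Real.sqrt 5 * ξ^3)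
      · exact eventually_mem_nhdsWithin.mono (fun x hx => by
          simpa [Real.norm_eq_abs] using hmain x hx)
      · have htb : Filter.Tendsto (fun ξ : ℝ => δ₀ * Real.sqrt 5 * ξ^3) (nhds 0)
            (nhds (δ₀ * Real.sqrt 5 * 0^3)) :=
          ((continuous_const.mul (continuous_pow 3)) :
            Continuous (fun ξ : ℝ => δ₀ * Real.sqrt 5 * ξ^3)).tendsto 0
        simpa using htb.mono_left nhdsWithin_le_nhds
    · have hξ0 : ξ ≠ 0 := ne_of_gt h0
      exact (continuousWithinAt_const.mul
        ((((continuousWithinAt_id.pow 2)).inv₀ (pow_ne_zero 2 hξ0)))).mul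
        (hF_cont ξ hξ)
  · intro ξ hξ
    have h3 : ξ^3 ≤ 1 := pow_le_one₀ hξ.1 hξ.2
    have hδ5 : δ₀ * Real.sqrt 5 < m := (lt_div_iff₀ hs5).mp h1
    calc |f ξ| ≤ δ₀ * Real.sqrt 5 * ξ^3 := hmain ξ hξ
      _ ≤ δ₀ * Real.sqrt 5 * 1 := by
          apply mul_le_mul_of_nonneg_left h3; positivity
      _ ≤ m := by linarith
end

section
/- Under the hypotheses δ₀ < m/√5, δ₀ ≤ 10/(3√5), 0 < m < 1, the operator (Jv)(ξ) = δ·ξ^{-2}·∫₀^ξ t⁴(p(t) - v(t))^{3/2} dt with |δ| ≤ δ₀ is a contraction on the closed ball of radius m in C([0,1]), with Lipschitz constant at most δ₀·(3√5)/10 < 1; in particular J has a unique fixed point v in that ball, and v(0) = 0. -/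
noncomputable section JAux

def Pa (t : ℝ) : ℝ := 4 - 6*t^2 + 4*t^4 - t^6
def Ga (v : ℝ → ℝ) (t : ℝ) : ℝ := t^4 * Real.sqrt (Pa t - v t) ^ 3

variable {m : ℝ}

lemma Pa_ge (t : ℝ) (ht : t ∈ Set.Icc (0:ℝ) 1) : 1 ≤ Pa t := by
  obtain ⟨h0, h1⟩ := ht
  have hs : t^2 ≤ 1 := by nlinarith
  unfold Pa
  nlinarith [sq_nonneg t, sq_nonneg (t^2-1), sq_nonneg (t^2), mul_nonneg (sq_nonneg t) (sub_nonneg.2 hs)]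

lemma Pa_le (t : ℝ) : Pa t ≤ 4 := by
  unfold Pa
  nlinarith [sq_nonneg (t^2 - 2), sq_nonneg t]

lemma base_mem (hm1 : m < 1) {v : ℝ → ℝ} {t : ℝ} (ht : t ∈ Set.Icc (0:ℝ) 1)
    (hv : |v t| ≤ m) : 0 ≤ Pa t - v t ∧ Pa t - v t ≤ 5 := by
  have h1 := Pa_ge t ht
  have h2 := Pa_le t
  have := abs_le.1 hv
  constructor <;> linarith [this.1, this.2]

lemma rpow_eq_sqrt_cube {x : ℝ} (hx : 0 ≤ x) : x ^ ((3:ℝ)/2) = Real.sqrt x ^ 3 := by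
  rw [Real.sqrt_eq_rpow, ← Real.rpow_natCast (x ^ ((1:ℝ)/2)) 3, ← Real.rpow_mul hx]
  norm_num

lemma cube_lip {x y : ℝ} (hx0 : 0 ≤ x) (hx5 : x ≤ 5) (hy0 : 0 ≤ y) (hy5 : y ≤ 5) :
    |Real.sqrt x ^ 3 - Real.sqrt y ^ 3| ≤ 3 * Real.sqrt 5 / 2 * |x - y| := by
  set a := Real.sqrt x with ha
  set b := Real.sqrt y with hb
  set c := Real.sqrt 5 with hc
  have ha0 : 0 ≤ a := Real.sqrt_nonneg x
  have hb0 : 0 ≤ b := Real.sqrt_nonneg y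
  have hac : a ≤ c := Real.sqrt_le_sqrt hx5
  have hbc : b ≤ c := Real.sqrt_le_sqrt hy5
  have ha2 : a ^ 2 = x := Real.sq_sqrt hx0
  have hb2 : b ^ 2 = y := Real.sq_sqrt hy0
  rw [← ha2, ← hb2]
  rcases le_total b a with h | h
  · rw [abs_of_nonneg (sub_nonneg.2 (pow_le_pow_left₀ hb0 h 3)),
      abs_of_nonneg (sub_nonneg.2 (pow_le_pow_left₀ hb0 h 2))]
    nlinarith [mul_nonneg (mul_nonneg (sub_nonneg.2 h) ha0) (sub_nonneg.2 hac),
      mul_nonneg (mul_nonneg (sub_nonneg.2 h) hb0) (sub_nonneg.2 hbc),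
      mul_nonneg (sub_nonneg.2 h) (sq_nonneg (a - b))]
  · rw [abs_of_nonpos (sub_nonpos.2 (pow_le_pow_left₀ ha0 h 3)),
      abs_of_nonpos (sub_nonpos.2 (pow_le_pow_left₀ ha0 h 2))]
    nlinarith [mul_nonneg (mul_nonneg (sub_nonneg.2 h) hb0) (sub_nonneg.2 hbc),
      mul_nonneg (mul_nonneg (sub_nonneg.2 h) ha0) (sub_nonneg.2 hac),
      mul_nonneg (sub_nonneg.2 h) (sq_nonneg (b - a))]

/-- Replace the rpow integrand by the sqrt-cube integrand. -/
lemma integral_congr_G (hm1 : m < 1) {v : ℝ → ℝ} (hv : ∀ t ∈ Set.Icc (0:ℝ) 1, |v t| ≤ m)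
    {ξ : ℝ} (hξ : ξ ∈ Set.Icc (0:ℝ) 1) :
    (∫ t in (0:ℝ)..ξ, t^4 * (((4 - 6*t^2 + 4*t^4 - t^6) - v t) ^ ((3:ℝ)/2)))
      = ∫ t in (0:ℝ)..ξ, Ga v t := by
  apply intervalIntegral.integral_congr
  intro t ht
  rw [Set.uIcc_of_le hξ.1] at ht
  have ht' : t ∈ Set.Icc (0:ℝ) 1 := ⟨ht.1, ht.2.trans hξ.2⟩
  have h0 := (base_mem hm1 ht' (hv t ht')).1
  show t^4 * (((4 - 6*t^2 + 4*t^4 - t^6) - v t) ^ ((3:ℝ)/2)) = Ga v t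
  unfold Ga Pa
  rw [rpow_eq_sqrt_cube]
  · unfold Pa at h0; linarith

lemma Pa_cont : Continuous Pa := by unfold Pa; continuity

lemma Ga_contOn {v : ℝ → ℝ} (hv : ContinuousOn v (Set.Icc 0 1)) :
    ContinuousOn (Ga v) (Set.Icc 0 1) := by
  unfold Ga
  exact (continuous_pow 4).continuousOn.mul
    (((Pa_cont.continuousOn.sub hv).sqrt).pow 3)

lemma Ga_cont {v : ℝ → ℝ} (hv : Continuous v) : Continuous (Ga v) := by
  unfold Ga
  exact (continuous_pow 4).mul (((Pa_cont.sub hv).sqrt).pow 3)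

lemma Ga_intable {v : ℝ → ℝ} (hv : ContinuousOn v (Set.Icc 0 1)) {ξ : ℝ}
    (hξ : ξ ∈ Set.Icc (0:ℝ) 1) : IntervalIntegrable (Ga v) MeasureTheory.volume 0 ξ :=
  ((Ga_contOn hv).mono (by
      rw [Set.uIcc_of_le hξ.1]
      exact Set.Icc_subset_Icc le_rfl hξ.2)).intervalIntegrable

/-- Core pointwise bound on the difference of integrands. -/
lemma Ga_diff_bound (hm1 : m < 1) {v₁ v₂ : ℝ → ℝ}
    (hv₁ : ∀ t ∈ Set.Icc (0:ℝ) 1, |v₁ t| ≤ m) (hv₂ : ∀ t ∈ Set.Icc (0:ℝ) 1, |v₂ t| ≤ m)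
    {K : ℝ} (hK : ∀ t ∈ Set.Icc (0:ℝ) 1, |v₁ t - v₂ t| ≤ K)
    {t : ℝ} (ht : t ∈ Set.Icc (0:ℝ) 1) :
    |Ga v₁ t - Ga v₂ t| ≤ t^4 * (3 * Real.sqrt 5 / 2 * K) := by
  obtain ⟨h10, h15⟩ := base_mem hm1 ht (hv₁ t ht)
  obtain ⟨h20, h25⟩ := base_mem hm1 ht (hv₂ t ht)
  have ht4 : (0:ℝ) ≤ t^4 := by positivity
  unfold Ga
  rw [← mul_sub, abs_mul, abs_of_nonneg ht4]
  apply mul_le_mul_of_nonneg_left _ ht4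
  calc |Real.sqrt (Pa t - v₁ t) ^ 3 - Real.sqrt (Pa t - v₂ t) ^ 3|
      ≤ 3 * Real.sqrt 5 / 2 * |(Pa t - v₁ t) - (Pa t - v₂ t)| := cube_lip h10 h15 h20 h25
    _ ≤ 3 * Real.sqrt 5 / 2 * K := by
        apply mul_le_mul_of_nonneg_left _ (by positivity)
        have : |(Pa t - v₁ t) - (Pa t - v₂ t)| = |v₁ t - v₂ t| := by
          rw [show (Pa t - v₁ t) - (Pa t - v₂ t) = -(v₁ t - v₂ t) by ring, abs_neg]
        rw [this]; exact hK t ht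

lemma sqrt5_pos : (0:ℝ) < Real.sqrt 5 := Real.sqrt_pos.2 (by norm_num)

/-- The key contraction estimate in pointwise form. -/
lemma keyEst (δ₀ m δ : ℝ) (hm1 : m < 1) (hδ₀ : 0 < δ₀) (hδ : |δ| ≤ δ₀)
    (v₁ v₂ : ℝ → ℝ) (hc₁ : ContinuousOn v₁ (Set.Icc 0 1)) (hc₂ : ContinuousOn v₂ (Set.Icc 0 1))
    (hv₁ : ∀ t ∈ Set.Icc (0:ℝ) 1, |v₁ t| ≤ m) (hv₂ : ∀ t ∈ Set.Icc (0:ℝ) 1, |v₂ t| ≤ m)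
    (K : ℝ) (hK : ∀ t ∈ Set.Icc (0:ℝ) 1, |v₁ t - v₂ t| ≤ K)
    (ξ : ℝ) (hξ : ξ ∈ Set.Icc (0:ℝ) 1) :
    |(δ * (ξ^2)⁻¹ *
        ∫ t in (0:ℝ)..ξ, t^4 * (((4 - 6*t^2 + 4*t^4 - t^6) - v₁ t) ^ ((3:ℝ)/2))) -
      (δ * (ξ^2)⁻¹ *
        ∫ t in (0:ℝ)..ξ, t^4 * (((4 - 6*t^2 + 4*t^4 - t^6) - v₂ t) ^ ((3:ℝ)/2)))| ≤
      δ₀ * (3 * Real.sqrt 5) / 10 * K := by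
  have hK0 : 0 ≤ K := le_trans (abs_nonneg _) (hK 0 (by norm_num))
  rw [integral_congr_G hm1 hv₁ hξ, integral_congr_G hm1 hv₂ hξ]
  rcases eq_or_lt_of_le hξ.1 with hξ0 | hξ0
  · rw [← hξ0]
    simp
    positivity
  · have hint₁ := Ga_intable hc₁ hξ
    have hint₂ := Ga_intable hc₂ hξ
    rw [← mul_sub, ← intervalIntegral.integral_sub hint₁ hint₂, abs_mul]
    have hIb : |∫ t in (0:ℝ)..ξ, (Ga v₁ t - Ga v₂ t)| ≤ 3 * Real.sqrt 5 / 10 * K * ξ^5 := by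
      have hmono : (∫ t in (0:ℝ)..ξ, |Ga v₁ t - Ga v₂ t|)
          ≤ ∫ t in (0:ℝ)..ξ, t^4 * (3 * Real.sqrt 5 / 2 * K) := by
        apply intervalIntegral.integral_mono_on hξ.1 ((hint₁.sub hint₂).abs)
        · exact ((continuous_pow 4).mul continuous_const).intervalIntegrable 0 ξ
        · intro t ht
          exact Ga_diff_bound hm1 hv₁ hv₂ hK ⟨ht.1, ht.2.trans hξ.2⟩
      have heq : (∫ t in (0:ℝ)..ξ, t^4 * (3 * Real.sqrt 5 / 2 * K))
          = 3 * Real.sqrt 5 / 10 * K * ξ^5 := by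
        rw [intervalIntegral.integral_mul_const, integral_pow]
        ring
      calc |∫ t in (0:ℝ)..ξ, (Ga v₁ t - Ga v₂ t)|
          ≤ ∫ t in (0:ℝ)..ξ, |Ga v₁ t - Ga v₂ t| := by
            exact intervalIntegral.abs_integral_le_integral_abs hξ.1
        _ ≤ 3 * Real.sqrt 5 / 10 * K * ξ^5 := heq ▸ hmono
    have h2 : |δ * (ξ^2)⁻¹| = |δ| * (ξ^2)⁻¹ := by
      rw [abs_mul, abs_inv, abs_of_nonneg (sq_nonneg ξ)]
    rw [h2]
    calc |δ| * (ξ^2)⁻¹ * |∫ t in (0:ℝ)..ξ, (Ga v₁ t - Ga v₂ t)|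
        ≤ |δ| * (ξ^2)⁻¹ * (3 * Real.sqrt 5 / 10 * K * ξ^5) := by
          apply mul_le_mul_of_nonneg_left hIb (by positivity)
      _ = |δ| * (3 * Real.sqrt 5 / 10 * K) * ξ^3 := by
          field_simp
      _ ≤ δ₀ * (3 * Real.sqrt 5) / 10 * K := by
          have hξ3 : ξ^3 ≤ 1 := pow_le_one₀ hξ.1 hξ.2
          have h5 : 0 < 3 * Real.sqrt 5 / 10 * K ∨ True := Or.inr trivial
          have hA : |δ| * (3 * Real.sqrt 5 / 10 * K) * ξ^3 ≤ |δ| * (3 * Real.sqrt 5 / 10 * K) * 1 := by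
            apply mul_le_mul_of_nonneg_left hξ3 (by positivity)
          have hB : |δ| * (3 * Real.sqrt 5 / 10 * K) ≤ δ₀ * (3 * Real.sqrt 5 / 10 * K) := by
            apply mul_le_mul_of_nonneg_right hδ (by positivity)
          calc |δ| * (3 * Real.sqrt 5 / 10 * K) * ξ^3 ≤ |δ| * (3 * Real.sqrt 5 / 10 * K) := by
                linarith
            _ ≤ δ₀ * (3 * Real.sqrt 5 / 10 * K) := hB
            _ = δ₀ * (3 * Real.sqrt 5) / 10 * K := by ring

def Jf (δ : ℝ) (v : ℝ → ℝ) (ξ : ℝ) : ℝ := δ * (ξ^2)⁻¹ * ∫ t in (0:ℝ)..ξ, Ga v t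

lemma sqrt5_cube : Real.sqrt 5 ^ 3 = 5 * Real.sqrt 5 := by
  have : Real.sqrt 5 ^ 2 = 5 := Real.sq_sqrt (by norm_num)
  nlinarith [Real.sqrt_nonneg 5]

/-- Bound `|Jf δ v ξ| ≤ |δ| √5 ξ³` on `[0,1]` for `|v| ≤ m < 1`. -/
lemma Jf_bound {δ : ℝ} (hm1 : m < 1) {v : ℝ → ℝ} (hc : ContinuousOn v (Set.Icc 0 1))
    (hv : ∀ t ∈ Set.Icc (0:ℝ) 1, |v t| ≤ m) {ξ : ℝ} (hξ : ξ ∈ Set.Icc (0:ℝ) 1) :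
    |Jf δ v ξ| ≤ |δ| * Real.sqrt 5 * ξ^3 := by
  rcases eq_or_lt_of_le hξ.1 with hξ0 | hξ0
  · rw [← hξ0]; simp [Jf]
  have hIb : |∫ t in (0:ℝ)..ξ, Ga v t| ≤ Real.sqrt 5 * ξ^5 := by
    have hmono : (∫ t in (0:ℝ)..ξ, |Ga v t|)
        ≤ ∫ t in (0:ℝ)..ξ, t^4 * (5 * Real.sqrt 5) := by
      apply intervalIntegral.integral_mono_on hξ.1 ((Ga_intable hc hξ).abs)
      · exact ((continuous_pow 4).mul continuous_const).intervalIntegrable 0 ξ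
      · intro t ht
        have ht' : t ∈ Set.Icc (0:ℝ) 1 := ⟨ht.1, ht.2.trans hξ.2⟩
        obtain ⟨h0, h5⟩ := base_mem hm1 ht' (hv t ht')
        have hs : Real.sqrt (Pa t - v t) ≤ Real.sqrt 5 := Real.sqrt_le_sqrt h5
        have hs0 : 0 ≤ Real.sqrt (Pa t - v t) := Real.sqrt_nonneg _
        have hcube : Real.sqrt (Pa t - v t) ^ 3 ≤ 5 * Real.sqrt 5 := by
          calc Real.sqrt (Pa t - v t) ^ 3 ≤ Real.sqrt 5 ^ 3 := pow_le_pow_left₀ hs0 hs 3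
            _ = 5 * Real.sqrt 5 := sqrt5_cube
        have ht4 : (0:ℝ) ≤ t^4 := by positivity
        rw [abs_of_nonneg (by unfold Ga; positivity)]
        unfold Ga
        exact mul_le_mul_of_nonneg_left hcube ht4
    have heq : (∫ t in (0:ℝ)..ξ, t^4 * (5 * Real.sqrt 5)) = Real.sqrt 5 * ξ^5 := by
      rw [intervalIntegral.integral_mul_const, integral_pow]; ring
    calc |∫ t in (0:ℝ)..ξ, Ga v t| ≤ ∫ t in (0:ℝ)..ξ, |Ga v t| :=
          intervalIntegral.abs_integral_le_integral_abs hξ.1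
      _ ≤ Real.sqrt 5 * ξ^5 := heq ▸ hmono
  unfold Jf
  rw [abs_mul, abs_mul, abs_inv, abs_of_nonneg (sq_nonneg ξ)]
  calc |δ| * (ξ^2)⁻¹ * |∫ t in (0:ℝ)..ξ, Ga v t|
      ≤ |δ| * (ξ^2)⁻¹ * (Real.sqrt 5 * ξ^5) :=
        mul_le_mul_of_nonneg_left hIb (by positivity)
    _ = |δ| * Real.sqrt 5 * ξ^3 := by field_simp

lemma Jf_contOn {δ : ℝ} (hm1 : m < 1) {v : ℝ → ℝ} (hc : Continuous v)
    (hv : ∀ t ∈ Set.Icc (0:ℝ) 1, |v t| ≤ m) :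
    ContinuousOn (Jf δ v) (Set.Icc 0 1) := by
  intro x hx
  rcases eq_or_lt_of_le hx.1 with hx0 | hx0
  · -- continuity at 0 via squeeze
    have h0 : Jf δ v 0 = 0 := by simp [Jf]
    rw [ContinuousWithinAt, ← hx0, h0]
    apply squeeze_zero_norm' (a := fun ξ => |δ| * Real.sqrt 5 * ξ^3)
    · filter_upwards [self_mem_nhdsWithin] with ξ hξ
      exact Jf_bound hm1 hc.continuousOn hv hξ
    · have h : Filter.Tendsto (fun ξ : ℝ => |δ| * Real.sqrt 5 * ξ^3)
          (nhdsWithin 0 (Set.Icc 0 1)) (nhds (|δ| * Real.sqrt 5 * 0^3)) :=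
        (Continuous.tendsto (by continuity) 0).mono_left nhdsWithin_le_nhds
      simpa using h
  · apply ContinuousAt.continuousWithinAt
    have h1 : ContinuousAt (fun ξ : ℝ => (ξ^2)⁻¹) x :=
      ((continuous_pow 2).continuousAt).inv₀ (pow_ne_zero 2 (ne_of_gt hx0))
    have h2 : Continuous (fun ξ : ℝ => ∫ t in (0:ℝ)..ξ, Ga v t) :=
      intervalIntegral.continuous_primitive
        (fun a b => ((Ga_cont hc).intervalIntegrable a b)) 0
    exact (continuousAt_const.mul h1).mul h2.continuousAt

abbrev Xc := C(Set.Icc (0:ℝ) 1, ℝ)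

def vext (f : Xc) : ℝ → ℝ := Set.IccExtend zero_le_one ⇑f

lemma vext_cont (f : Xc) : Continuous (vext f) := f.continuous.Icc_extend'

lemma vext_of_mem (f : Xc) {t : ℝ} (ht : t ∈ Set.Icc (0:ℝ) 1) : vext f t = f ⟨t, ht⟩ :=
  Set.IccExtend_of_mem _ _ ht

lemma vext_bound (f : Xc) (t : ℝ) : |vext f t| ≤ ‖f‖ := by
  rw [← Real.norm_eq_abs]
  exact f.norm_coe_le_norm _

lemma klt1 (δ₀ m : ℝ) (hm1 : m < 1) (hδ₀ : 0 < δ₀) (h1 : δ₀ < m / Real.sqrt 5) :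
    δ₀ * (3 * Real.sqrt 5) / 10 < 1 := by
  have h5 := sqrt5_pos
  have hδm : δ₀ * Real.sqrt 5 < m := (lt_div_iff₀ h5).1 h1
  nlinarith

lemma part3 (δ₀ m δ : ℝ) (hm0 : 0 < m) (hm1 : m < 1)
    (hδ₀ : 0 < δ₀) (h1 : δ₀ < m / Real.sqrt 5) (hδ : |δ| ≤ δ₀) :
    (∃ v : ℝ → ℝ,
      (ContinuousOn v (Set.Icc 0 1) ∧ (∀ t ∈ Set.Icc (0:ℝ) 1, |v t| ≤ m) ∧
        (∀ ξ ∈ Set.Icc (0:ℝ) 1,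
          v ξ = δ * (ξ^2)⁻¹ *
            ∫ t in (0:ℝ)..ξ, t^4 * (((4 - 6*t^2 + 4*t^4 - t^6) - v t) ^ ((3:ℝ)/2))) ∧
        v 0 = 0) ∧
      ∀ w : ℝ → ℝ, ContinuousOn w (Set.Icc 0 1) → (∀ t ∈ Set.Icc (0:ℝ) 1, |w t| ≤ m) →
        (∀ ξ ∈ Set.Icc (0:ℝ) 1,
          w ξ = δ * (ξ^2)⁻¹ *
            ∫ t in (0:ℝ)..ξ, t^4 * (((4 - 6*t^2 + 4*t^4 - t^6) - w t) ^ ((3:ℝ)/2))) →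
        ∀ ξ ∈ Set.Icc (0:ℝ) 1, w ξ = v ξ) := by
  have h5 := sqrt5_pos
  have hδm : δ₀ * Real.sqrt 5 < m := (lt_div_iff₀ h5).1 h1
  set B := Metric.closedBall (0 : Xc) m with hBdef
  haveI : CompleteSpace B := Metric.isClosed_closedBall.completeSpace_coe
  haveI : Nonempty B := ⟨⟨0, Metric.mem_closedBall_self hm0.le⟩⟩
  have hmem : ∀ f : Xc, ‖f‖ ≤ m → ∀ t ∈ Set.Icc (0:ℝ) 1, |vext f t| ≤ m :=
    fun f hf t _ => le_trans (vext_bound f t) hf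
  have hnormB : ∀ f : B, ‖(f : Xc)‖ ≤ m := fun f => mem_closedBall_zero_iff.1 f.2
  -- the operator
  have Tcont : ∀ f : B, Continuous fun ξ : Set.Icc (0:ℝ) 1 => Jf δ (vext (f : Xc)) ξ.1 :=
    fun f => (Jf_contOn hm1 (vext_cont _) (hmem _ (hnormB f))).restrict
  have Tball : ∀ f : B, (⟨_, Tcont f⟩ : Xc) ∈ B := by
    intro f
    refine mem_closedBall_zero_iff.2 ((ContinuousMap.norm_le _ hm0.le).2 ?_)
    intro x
    rw [Real.norm_eq_abs]
    calc |Jf δ (vext (f : Xc)) x.1| ≤ |δ| * Real.sqrt 5 * x.1^3 :=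
          Jf_bound hm1 (vext_cont _).continuousOn (hmem _ (hnormB f)) x.2
      _ ≤ δ₀ * Real.sqrt 5 * 1 := by
          have hx3 : x.1^3 ≤ 1 := pow_le_one₀ x.2.1 x.2.2
          have hx30 : (0:ℝ) ≤ x.1^3 := pow_nonneg x.2.1 3
          apply mul_le_mul (mul_le_mul_of_nonneg_right hδ h5.le) hx3 hx30 (mul_nonneg hδ₀.le h5.le)
      _ ≤ m := by nlinarith
  set T : B → B := fun f => ⟨⟨_, Tcont f⟩, Tball f⟩ with hTdef
  set kR : ℝ := δ₀ * (3 * Real.sqrt 5) / 10 with hkRdef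
  have hkR0 : 0 ≤ kR := by positivity
  have hkR1 : kR < 1 := klt1 δ₀ m hm1 hδ₀ h1
  have hT : ContractingWith (Real.toNNReal kR) T := by
    constructor
    · rw [← NNReal.coe_lt_coe, Real.coe_toNNReal _ hkR0]
      exact hkR1
    · apply LipschitzWith.of_dist_le_mul
      intro f g
      rw [Subtype.dist_eq, dist_eq_norm, Real.coe_toNNReal _ hkR0]
      have hd : dist f g = ‖(f : Xc) - (g : Xc)‖ := by rw [Subtype.dist_eq, dist_eq_norm]
      rw [hd]
      have hK0 : (0:ℝ) ≤ kR * ‖(f : Xc) - (g : Xc)‖ := by positivity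
      rw [ContinuousMap.norm_le _ hK0]
      intro x
      rw [ContinuousMap.sub_apply, Real.norm_eq_abs]
      have hKb : ∀ t ∈ Set.Icc (0:ℝ) 1,
          |vext (f : Xc) t - vext (g : Xc) t| ≤ ‖(f : Xc) - (g : Xc)‖ := by
        intro t ht
        rw [vext_of_mem _ ht, vext_of_mem _ ht, ← ContinuousMap.sub_apply, ← Real.norm_eq_abs]
        exact ContinuousMap.norm_coe_le_norm _ _
      have hkey := keyEst δ₀ m δ hm1 hδ₀ hδ (vext (f : Xc)) (vext (g : Xc))
        (vext_cont _).continuousOn (vext_cont _).continuousOn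
        (hmem _ (hnormB f)) (hmem _ (hnormB g))
        (‖(f : Xc) - (g : Xc)‖) hKb x.1 x.2
      show |Jf δ (vext (f : Xc)) x.1 - Jf δ (vext (g : Xc)) x.1| ≤ _
      rw [Jf, Jf, ← integral_congr_G hm1 (hmem _ (hnormB f)) x.2,
        ← integral_congr_G hm1 (hmem _ (hnormB g)) x.2]
      exact hkey
  set v₀ : B := ContractingWith.fixedPoint T hT with hv₀def
  have hfix : T v₀ = v₀ := hT.fixedPoint_isFixedPt
  set vf : ℝ → ℝ := vext (v₀ : Xc) with hvfdef
  have hbv : ∀ t ∈ Set.Icc (0:ℝ) 1, |vf t| ≤ m := hmem _ (hnormB v₀)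
  have hfixpt : ∀ ξ (hξ : ξ ∈ Set.Icc (0:ℝ) 1), Jf δ vf ξ = vf ξ := by
    intro ξ hξ
    have h := congrFun (congrArg (fun (f : B) => ⇑(f : Xc)) hfix) ⟨ξ, hξ⟩
    rw [hvfdef, vext_of_mem _ hξ]
    exact h
  have heq : ∀ ξ ∈ Set.Icc (0:ℝ) 1,
      vf ξ = δ * (ξ^2)⁻¹ *
        ∫ t in (0:ℝ)..ξ, t^4 * (((4 - 6*t^2 + 4*t^4 - t^6) - vf t) ^ ((3:ℝ)/2)) := by
    intro ξ hξ
    rw [integral_congr_G hm1 hbv hξ]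
    exact (hfixpt ξ hξ).symm
  refine ⟨vf, ⟨(vext_cont _).continuousOn, hbv, heq, ?_⟩, ?_⟩
  · have h0 := hfixpt 0 ⟨le_rfl, by norm_num⟩
    simp [Jf] at h0
    exact h0.symm
  · intro w hwc hwb hweq ξ hξ
    set wC : Xc := ⟨Set.restrict _ w, hwc.restrict⟩ with hwCdef
    have hwCn : ‖wC‖ ≤ m := (ContinuousMap.norm_le _ hm0.le).2
      (fun x => by rw [Real.norm_eq_abs]; exact hwb x.1 x.2)
    have hwB : wC ∈ B := mem_closedBall_zero_iff.2 hwCn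
    have hext : ∀ t ∈ Set.Icc (0:ℝ) 1, vext wC t = w t := by
      intro t ht
      rw [vext_of_mem _ ht]
      rfl
    have hwfix : Function.IsFixedPt T ⟨wC, hwB⟩ := by
      apply Subtype.ext
      apply ContinuousMap.ext
      intro x
      show Jf δ (vext wC) x.1 = wC x
      have hGeq : (∫ t in (0:ℝ)..x.1, Ga (vext wC) t) = ∫ t in (0:ℝ)..x.1, Ga w t := by
        apply intervalIntegral.integral_congr
        intro t ht
        rw [Set.uIcc_of_le x.2.1] at ht
        have ht' : t ∈ Set.Icc (0:ℝ) 1 := ⟨ht.1, ht.2.trans x.2.2⟩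
        unfold Ga
        rw [hext t ht']
      rw [Jf, hGeq, ← integral_congr_G hm1 hwb x.2, ← hweq x.1 x.2]
      rfl
    have huniq : (⟨wC, hwB⟩ : B) = v₀ := hT.fixedPoint_unique hwfix
    calc w ξ = wC ⟨ξ, hξ⟩ := rfl
      _ = (v₀ : Xc) ⟨ξ, hξ⟩ := by rw [← huniq]
      _ = vf ξ := (vext_of_mem _ hξ).symm


/-- Under `δ₀ < m/√5`, `δ₀ ≤ 10/(3√5)`, `0 < m < 1`, `|δ| ≤ δ₀`, the operator
`(Jv)(ξ) = δ ξ⁻² ∫₀^ξ t⁴ (p(t) - v(t))^{3/2} dt` is a contraction with Lipschitz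
constant at most `δ₀ (3√5)/10 < 1` on the closed radius-`m` ball of `C([0,1])`;
in particular it has a unique fixed point `v` there, and `v(0) = 0`. -/
theorem J_contraction_fixed_point (δ₀ m δ : ℝ) (hm0 : 0 < m) (hm1 : m < 1)
    (hδ₀ : 0 < δ₀) (h1 : δ₀ < m / Real.sqrt 5) (h2 : δ₀ ≤ 10 / (3 * Real.sqrt 5))
    (hδ : |δ| ≤ δ₀) :
    (∀ v₁ v₂ : ℝ → ℝ, ContinuousOn v₁ (Set.Icc 0 1) → ContinuousOn v₂ (Set.Icc 0 1) →
      (∀ t ∈ Set.Icc (0:ℝ) 1, |v₁ t| ≤ m) → (∀ t ∈ Set.Icc (0:ℝ) 1, |v₂ t| ≤ m) →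
      ∀ K : ℝ, (∀ t ∈ Set.Icc (0:ℝ) 1, |v₁ t - v₂ t| ≤ K) →
      ∀ ξ ∈ Set.Icc (0:ℝ) 1,
        |(δ * (ξ^2)⁻¹ *
            ∫ t in (0:ℝ)..ξ, t^4 * (((4 - 6*t^2 + 4*t^4 - t^6) - v₁ t) ^ ((3:ℝ)/2))) -
          (δ * (ξ^2)⁻¹ *
            ∫ t in (0:ℝ)..ξ, t^4 * (((4 - 6*t^2 + 4*t^4 - t^6) - v₂ t) ^ ((3:ℝ)/2)))| ≤
          δ₀ * (3 * Real.sqrt 5) / 10 * K) ∧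
    δ₀ * (3 * Real.sqrt 5) / 10 < 1 ∧
    (∃ v : ℝ → ℝ,
      (ContinuousOn v (Set.Icc 0 1) ∧ (∀ t ∈ Set.Icc (0:ℝ) 1, |v t| ≤ m) ∧
        (∀ ξ ∈ Set.Icc (0:ℝ) 1,
          v ξ = δ * (ξ^2)⁻¹ *
            ∫ t in (0:ℝ)..ξ, t^4 * (((4 - 6*t^2 + 4*t^4 - t^6) - v t) ^ ((3:ℝ)/2))) ∧
        v 0 = 0) ∧
      ∀ w : ℝ → ℝ, ContinuousOn w (Set.Icc 0 1) → (∀ t ∈ Set.Icc (0:ℝ) 1, |w t| ≤ m) →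
        (∀ ξ ∈ Set.Icc (0:ℝ) 1,
          w ξ = δ * (ξ^2)⁻¹ *
            ∫ t in (0:ℝ)..ξ, t^4 * (((4 - 6*t^2 + 4*t^4 - t^6) - w t) ^ ((3:ℝ)/2))) →
        ∀ ξ ∈ Set.Icc (0:ℝ) 1, w ξ = v ξ) := by
  refine ⟨fun v₁ v₂ hc₁ hc₂ hv₁ hv₂ K hK ξ hξ =>
      keyEst δ₀ m δ hm1 hδ₀ hδ v₁ v₂ hc₁ hc₂ hv₁ hv₂ K hK ξ hξ,
    klt1 δ₀ m hm1 hδ₀ h1,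
    part3 δ₀ m δ hm0 hm1 hδ₀ h1 hδ⟩
end JAux
end
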